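/- arXiv:1905.00951 — 8 statements merged into one kernel-verified Lean document; each statement's English description precedes it below -/
import Mathlib

section
/- Let G be a torsion-free group and let α be a nonzero element of the complex group algebra ℂG such that 2‖α‖₂² ≥ ‖α‖₁². Then α is regular in ℂG, i.e. for every nonzero β ∈ ℂG one has αβ ≠ 0. -/
open scoped ENNReal

/-- The adjoint `α* = ∑ conj(a_g)·g⁻¹` of an element of the complex group algebra. -/
noncomputable def MonoidAlgebra.adj {G : Type*} [Group G] (α : MonoidAlgebra ℂ G) :
    MonoidAlgebra ℂ G :=
  MonoidAlgebra.ofCoeff (Finsupp.mapRange (starRingEnd ℂ) (map_zero _) (Finsupp.equivMapDomain (Equiv.inv G) α.coeff))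

/-- The product of `α ∈ ℂG` with `β ∈ ℓ²(G)`, defined pointwise by the finite sum
`(αβ)(x) = ∑_{g ∈ supp α} α(g)·β(g⁻¹x)`. -/
noncomputable def smulL2 {G : Type*} [Group G] (α : MonoidAlgebra ℂ G)
    (β : lp (fun _ : G => ℂ) 2) : G → ℂ :=
  fun x => ∑ g ∈ α.coeff.support, α.coeff g * β (g⁻¹ * x)

/-- `Υ(α) = a_1 − ∑_{g ≠ 1} |a_g|` (for self-adjoint `α`, `a_1` is real, so we take
the real part). -/
noncomputable def Upsilon {G : Type*} [Group G] [DecidableEq G] (α : MonoidAlgebra ℂ G) : ℝ :=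
  (α.coeff 1).re - ∑ g ∈ α.coeff.support.erase 1, ‖α.coeff g‖

/-- A self-adjoint element of `ℂG` is golden if `Υ(α) ≥ 0`. -/
def IsGolden {G : Type*} [Group G] [DecidableEq G] (α : MonoidAlgebra ℂ G) : Prop :=
  MonoidAlgebra.adj α = α ∧ 0 ≤ Upsilon α

lemma translate_memℓp {G : Type*} [Group G] (g : G) (f : lp (fun _ : G => ℝ) ∞) :
    Memℓp (fun x => f (g⁻¹ * x)) ∞ := by
  have hf : Memℓp (fun x => f x) ∞ := f.2
  rw [memℓp_infty_iff] at hf ⊢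
  obtain ⟨C, hC⟩ := hf
  exact ⟨C, by rintro y ⟨x, rfl⟩; exact hC ⟨g⁻¹ * x, rfl⟩⟩

/-- A group is amenable if there is a left-invariant mean on `ℓ∞(G, ℝ)`: a linear
functional `m` with `m 1 = 1`, `m f ≥ 0` whenever `f ≥ 0`, which is invariant under
left translation. -/
def IsAmenable (G : Type*) [Group G] : Prop :=
  ∃ m : lp (fun _ : G => ℝ) ∞ →ₗ[ℝ] ℝ,
    m 1 = 1 ∧
    (∀ f : lp (fun _ : G => ℝ) ∞, (∀ x, 0 ≤ f x) → 0 ≤ m f) ∧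
    ∀ (g : G) (f : lp (fun _ : G => ℝ) ∞),
      m ⟨fun x => f (g⁻¹ * x), translate_memℓp g f⟩ = m f

/-- A monoid is torsion-free if its only element of finite order is `1`
(the definition of `Monoid.IsTorsionFree` in the older Mathlib, since removed). -/
def Monoid.IsTorsionFree (G : Type*) [Monoid G] : Prop :=
  ∀ g : G, g ≠ 1 → ¬IsOfFinOrder g

/-!
If `αβ = 0`, expand `0 = ‖αβ‖₂² = ∑_{g,h} conj(a_g) a_h ⟪gβ, hβ⟫` in `ℓ²(G)`. The diagonal
contributes `‖α‖₂² ‖β‖₂²`. For `g ≠ h` the translates `gβ` and `hβ` are not proportional: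
`(g⁻¹h)β = cβ` would make the finite support of `β` invariant under `g⁻¹h`, which then has
finite order. By the equality case of Cauchy–Schwarz, `|⟪gβ, hβ⟫| < ‖β‖₂²`, so as soon as
`α` has two terms, `0 = ‖αβ‖₂² > (2‖α‖₂² - ‖α‖₁²) ‖β‖₂² ≥ 0`; a single term `a_g g` is a unit.
-/

open Finset
open scoped InnerProductSpace

theorem Finset.sum_product_self_eq_add_sum_offDiag {ι M : Type*} [AddCommMonoid M]
    [DecidableEq ι] (s : Finset ι) (f : ι × ι → M) :
    ∑ p ∈ s ×ˢ s, f p = ∑ i ∈ s, f (i, i) + ∑ p ∈ s.offDiag, f p := by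
  rw [← s.diag_union_offDiag, sum_union s.disjoint_diag_offDiag, sum_diag]

section InnerProductSpace

variable {𝕜 E ι : Type*} [RCLike 𝕜] [NormedAddCommGroup E] [InnerProductSpace 𝕜 E]

theorem sum_sub_sum_offDiag_le_norm_sum_smul_sq (s : Finset ι) (a : ι → 𝕜) (u : ι → E) :
    ∑ i ∈ s, ‖a i‖ ^ 2 * ‖u i‖ ^ 2 - ∑ p ∈ s.offDiag, ‖a p.1‖ * ‖a p.2‖ * ‖⟪u p.1, u p.2⟫_𝕜‖ ≤
      ‖∑ i ∈ s, a i • u i‖ ^ 2 := by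
  classical
  have hexpand : ‖∑ i ∈ s, a i • u i‖ ^ 2 =
      ∑ p ∈ s ×ˢ s, RCLike.re (starRingEnd 𝕜 (a p.1) * a p.2 * ⟪u p.1, u p.2⟫_𝕜) := by
    rw [← RCLike.ofReal_re (K := 𝕜) (_ ^ 2), RCLike.ofReal_pow, ← inner_self_eq_norm_sq_to_K,
      sum_inner, sum_product]
    simp only [inner_sum, inner_smul_left, inner_smul_right, map_sum, mul_assoc, mul_left_comm]
  have hdiag (i : ι) :
      RCLike.re (starRingEnd 𝕜 (a i) * a i * ⟪u i, u i⟫_𝕜) = ‖a i‖ ^ 2 * ‖u i‖ ^ 2 := by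
    rw [RCLike.conj_mul, inner_self_eq_norm_sq_to_K, ← RCLike.ofReal_pow, ← RCLike.ofReal_pow,
      ← RCLike.ofReal_mul, RCLike.ofReal_re]
  have hoff (p : ι × ι) : -(‖a p.1‖ * ‖a p.2‖ * ‖⟪u p.1, u p.2⟫_𝕜‖) ≤
      RCLike.re (starRingEnd 𝕜 (a p.1) * a p.2 * ⟪u p.1, u p.2⟫_𝕜) := by
    simpa [norm_mul] using neg_le_of_abs_le (RCLike.abs_re_le_norm
      (starRingEnd 𝕜 (a p.1) * a p.2 * ⟪u p.1, u p.2⟫_𝕜))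
  rw [hexpand, sum_product_self_eq_add_sum_offDiag, sub_eq_add_neg, ← sum_neg_distrib]
  exact add_le_add (sum_le_sum fun i _ => (hdiag i).ge) (sum_le_sum fun p _ => hoff p)

theorem sum_smul_ne_zero_of_sq_sum_norm_le {s : Finset ι} (hs : s.Nonempty) {a : ι → 𝕜}
    (ha : ∀ i ∈ s, a i ≠ 0) {u : ι → E} {r : ℝ} (hr : 0 < r) (hu : ∀ i ∈ s, ‖u i‖ = r)
    (hinner : ∀ i ∈ s, ∀ j ∈ s, i ≠ j → ‖⟪u i, u j⟫_𝕜‖ < r ^ 2)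
    (h : (∑ i ∈ s, ‖a i‖) ^ 2 ≤ 2 * ∑ i ∈ s, ‖a i‖ ^ 2) :
    ∑ i ∈ s, a i • u i ≠ 0 := by
  classical
  set D := ∑ i ∈ s, ‖a i‖ ^ 2
  have hD : 0 < D := sum_pos (fun i hi => by have := ha i hi; positivity) hs
  have hsq : (∑ i ∈ s, ‖a i‖) ^ 2 = D + ∑ p ∈ s.offDiag, ‖a p.1‖ * ‖a p.2‖ := by
    rw [sq, sum_mul_sum, ← sum_product', sum_product_self_eq_add_sum_offDiag]
    simp only [sq, D]
  have hoff : ∑ p ∈ s.offDiag, ‖a p.1‖ * ‖a p.2‖ * ‖⟪u p.1, u p.2⟫_𝕜‖ < D * r ^ 2 := by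
    rcases s.offDiag.eq_empty_or_nonempty with hempty | hne
    · rw [hempty, sum_empty]
      positivity
    calc ∑ p ∈ s.offDiag, ‖a p.1‖ * ‖a p.2‖ * ‖⟪u p.1, u p.2⟫_𝕜‖
        < ∑ p ∈ s.offDiag, ‖a p.1‖ * ‖a p.2‖ * r ^ 2 := by
          refine sum_lt_sum_of_nonempty hne fun p hp => ?_
          obtain ⟨h1, h2, h12⟩ := mem_offDiag.mp hp
          have := ha _ h1
          have := ha _ h2
          exact mul_lt_mul_of_pos_left (hinner _ h1 _ h2 h12) (by positivity)
      _ ≤ D * r ^ 2 := by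
          rw [← sum_mul]
          gcongr
          linarith
  intro hzero
  have hnorm := sum_sub_sum_offDiag_le_norm_sum_smul_sq s a u
  rw [hzero, norm_zero, sum_congr rfl fun i hi => by rw [hu i hi], ← sum_mul] at hnorm
  linarith

end InnerProductSpace

theorem IsOfFinOrder.of_forall_mul_mem {M : Type*} [CancelMonoid M] {S : Set M} (hS : S.Finite)
    {x k : M} (hx : x ∈ S) (hk : ∀ y ∈ S, k * y ∈ S) : IsOfFinOrder k := by
  by_contra hinf
  have hmem (n : ℕ) : k ^ n * x ∈ S := by
    induction n with
    | zero => simpa using hx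
    | succ n ih => simpa [pow_succ', mul_assoc] using hk _ ih
  have hinj : Function.Injective fun n : ℕ => k ^ n * x := fun m n hmn =>
    injective_pow_iff_not_isOfFinOrder.mpr hinf (mul_right_cancel hmn)
  exact Set.infinite_of_injective_forall_mem hinj hmem hS

namespace MonoidAlgebra

theorem mul_eq_sum_smul_of_mul {R G : Type*} [Semiring R] [Monoid G] (α β : MonoidAlgebra R G) :
    α * β = ∑ g ∈ α.coeff.support, α.coeff g • (of R G g * β) := by
  conv_lhs => rw [← sum_coeff_single α]
  simp only [Finsupp.sum, sum_mul, ← smul_of, smul_mul_assoc]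

theorem eq_one_of_of_mul_eq_smul {R G : Type*} [Semiring R] [Group G]
    (hG : Monoid.IsTorsionFree G) {β : MonoidAlgebra R G} (hβ : β ≠ 0) {k : G} {c : R}
    (h : of R G k * β = c • β) : k = 1 := by
  by_contra hk
  obtain ⟨x, hx⟩ := Finsupp.support_nonempty_iff.mpr (coeff_eq_zero.not.mpr hβ)
  refine hG k hk (IsOfFinOrder.of_forall_mul_mem β.coeff.support.finite_toSet hx fun y hy => ?_)
  have hky : (of R G k * β).coeff (k * y) ≠ 0 := by simpa using hy
  rw [h, coeff_smul_apply] at hky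
  exact Finsupp.mem_support_iff.mpr (right_ne_zero_of_smul hky)

variable {𝕜 G : Type*} [RCLike 𝕜]

noncomputable def toL2 : MonoidAlgebra 𝕜 G →ₗ[𝕜] lp (fun _ : G => 𝕜) 2 where
  toFun β := ⟨⇑β.coeff, (memℓp_zero β.coeff.hasFiniteSupport).of_exponent_ge zero_le⟩
  map_add' _ _ := rfl
  map_smul' _ _ := rfl

@[simp]
theorem toL2_apply (β : MonoidAlgebra 𝕜 G) (x : G) : toL2 β x = β.coeff x := rfl

theorem toL2_injective : Function.Injective (toL2 : MonoidAlgebra 𝕜 G →ₗ[𝕜] _) :=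
  fun _ _ h => coeff_injective (Finsupp.ext fun x => congrArg (· x) h)

variable [Group G]

theorem norm_toL2_of_mul (g : G) (β : MonoidAlgebra 𝕜 G) :
    ‖toL2 (of 𝕜 G g * β)‖ = ‖toL2 β‖ := by
  have h2 : (0 : ℝ) < (2 : ℝ≥0∞).toReal := by norm_num
  rw [lp.norm_eq_tsum_rpow h2, lp.norm_eq_tsum_rpow h2]
  simp only [toL2_apply, of_apply, coeff_single_mul_apply, one_mul]
  congr 1
  exact (Equiv.mulLeft g⁻¹).tsum_eq fun x => ‖β.coeff x‖ ^ (2 : ℝ≥0∞).toReal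

theorem norm_inner_toL2_of_mul_lt (hG : Monoid.IsTorsionFree G) {β : MonoidAlgebra 𝕜 G}
    (hβ : β ≠ 0) {g h : G} (hgh : g ≠ h) :
    ‖⟪toL2 (of 𝕜 G g * β), toL2 (of 𝕜 G h * β)⟫_𝕜‖ < ‖toL2 β‖ ^ 2 := by
  have hne (k : G) : toL2 (of 𝕜 G k * β) ≠ 0 := by
    rw [map_ne_zero_iff _ toL2_injective]
    exact ((Group.isUnit k).map (of 𝕜 G)).mul_right_eq_zero.not.mpr hβ
  have hsq : ‖toL2 β‖ ^ 2 = ‖toL2 (of 𝕜 G g * β)‖ * ‖toL2 (of 𝕜 G h * β)‖ := by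
    rw [norm_toL2_of_mul, norm_toL2_of_mul, sq]
  rw [hsq]
  refine (norm_inner_le_norm _ _).lt_of_ne fun heq => hgh ?_
  obtain ⟨c, -, hc⟩ := (norm_inner_eq_norm_iff (hne g) (hne h)).mp heq
  rw [← map_smul, ← mul_smul_comm] at hc
  have hshift : of 𝕜 G (g⁻¹ * h) * β = c • β := by
    rw [map_mul, mul_assoc, toL2_injective hc, ← mul_assoc, ← map_mul, inv_mul_cancel, map_one,
      one_mul]
  exact inv_mul_eq_one.mp (eq_one_of_of_mul_eq_smul hG hβ hshift)

end MonoidAlgebra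

/-- If `α ≠ 0` in `ℂG` for a torsion-free group `G` satisfies `2‖α‖₂² ≥ ‖α‖₁²`,
then `α` is regular. -/
theorem stmt_0 {G : Type*} [Group G] (hG : Monoid.IsTorsionFree G)
    (α : MonoidAlgebra ℂ G) (hα : α ≠ 0)
    (h : 2 * ∑ g ∈ α.coeff.support, ‖α.coeff g‖ ^ 2 ≥
      (∑ g ∈ α.coeff.support, ‖α.coeff g‖) ^ 2) :
    ∀ β : MonoidAlgebra ℂ G, β ≠ 0 → α * β ≠ 0 := by
  intro β hβ hαβ
  have hsupp : α.coeff.support.Nonempty :=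
    Finsupp.support_nonempty_iff.mpr (MonoidAlgebra.coeff_eq_zero.not.mpr hα)
  have hβnorm : 0 < ‖MonoidAlgebra.toL2 β‖ :=
    norm_pos_iff.mpr ((map_ne_zero_iff _ MonoidAlgebra.toL2_injective).mpr hβ)
  refine sum_smul_ne_zero_of_sq_sum_norm_le hsupp (fun g => Finsupp.mem_support_iff.mp) hβnorm
    (fun g _ => MonoidAlgebra.norm_toL2_of_mul g β)
    (fun g _ g' _ => MonoidAlgebra.norm_inner_toL2_of_mul_lt hG hβ) h ?_
  simp_rw [← map_smul, ← map_sum, ← MonoidAlgebra.mul_eq_sum_smul_of_mul, hαβ, map_zero]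
end

section
/- Let G be a torsion-free group and let α be a nonzero element of the complex group algebra ℂG such that 2‖α‖₂² ≥ ‖α‖₁². Then α is not an analytical zero divisor: for every nonzero β ∈ ℓ²(G) one has αβ ≠ 0. -/
open scoped ENNReal

/-! Write `λ_g β = β(g⁻¹ ·)`, so that `αβ = ∑ a_g λ_g β` with all `λ_g β` of norm `‖β‖`.
Expanding `0 = ‖∑ a_g λ_g β‖²` and bounding the off-diagonal entries `⟪λ_g β, λ_k β⟫` by
Cauchy–Schwarz gives `0 ≥ (2‖α‖₂² − ‖α‖₁²)‖β‖² + ∑ |a_g||a_k| (‖β‖² − |⟪λ_g β, λ_k β⟫|)`,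
so for some `g ≠ k` Cauchy–Schwarz is an equality and `λ_k β = c λ_g β`. Then `λ_t β = c β`
for `t = g⁻¹k`, which has infinite order; hence `|β|` is constant and nonzero along the
infinite orbit `(t⁻ⁿx)ₙ`, which is impossible in `ℓ²(G)`. -/

open Finset RCLike ComplexConjugate
open scoped InnerProductSpace

section InnerProductSpace

variable {𝕜 E ι : Type*} [RCLike 𝕜] [NormedAddCommGroup E] [InnerProductSpace 𝕜 E]

theorem norm_sum_smul_sq (s : Finset ι) (a : ι → 𝕜) (v : ι → E) :
    ‖∑ i ∈ s, a i • v i‖ ^ 2 = ∑ i ∈ s, ∑ j ∈ s, re (conj (a i) * a j * ⟪v i, v j⟫_𝕜) := by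
  rw [← inner_self_eq_norm_sq (𝕜 := 𝕜), sum_inner, map_sum]
  refine sum_congr rfl fun i _ => ?_
  rw [inner_sum, map_sum]
  refine sum_congr rfl fun j _ => ?_
  rw [inner_smul_left, inner_smul_right, mul_assoc]

theorem ite_le_re_add_norm_conj_mul_inner (a : ι → 𝕜) (v : ι → E) [DecidableEq ι] (i j : ι) :
    (if i = j then 2 * (‖a i‖ ^ 2 * ‖v i‖ ^ 2) else 0) ≤
      re (conj (a i) * a j * ⟪v i, v j⟫_𝕜) + ‖a i‖ * ‖a j‖ * ‖⟪v i, v j⟫_𝕜‖ := by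
  split_ifs with hij
  · subst hij
    rw [RCLike.conj_mul, inner_self_eq_norm_sq_to_K, norm_pow, norm_ofReal, abs_norm, ← ofReal_pow,
      ← ofReal_pow, ← ofReal_mul, ofReal_re]
    nlinarith
  · have := neg_le_of_abs_le (abs_re_le_norm (conj (a i) * a j * ⟪v i, v j⟫_𝕜))
    simp only [norm_mul, RCLike.norm_conj] at this
    linarith

theorem exists_ne_norm_inner_eq_of_sum_smul_eq_zero {s : Finset ι} {a : ι → 𝕜} {v : ι → E}
    {N : ℝ} (hN : 0 < N) (hv : ∀ i ∈ s, ‖v i‖ = N) (hs : s.Nonempty) (ha : ∀ i ∈ s, a i ≠ 0)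
    (hL : (∑ i ∈ s, ‖a i‖) ^ 2 ≤ 2 * ∑ i ∈ s, ‖a i‖ ^ 2) (h0 : ∑ i ∈ s, a i • v i = 0) :
    ∃ i ∈ s, ∃ j ∈ s, i ≠ j ∧ ‖⟪v i, v j⟫_𝕜‖ = ‖v i‖ * ‖v j‖ := by
  classical
  obtain ⟨i, rfl⟩ | ⟨i, hi, j, hj, hij⟩ := hs.exists_eq_singleton_or_nontrivial
  · have hvi : v i ≠ 0 := norm_pos_iff.1 (hv i (mem_singleton_self i) ▸ hN)
    simp only [sum_singleton, smul_eq_zero] at h0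
    exact absurd h0 (not_or.2 ⟨ha i (mem_singleton_self i), hvi⟩)
  by_contra! hne
  set w : ι → ι → ℝ := fun i j => ‖a i‖ * ‖a j‖ * ‖⟪v i, v j⟫_𝕜‖
  have hlow : 2 * (∑ i ∈ s, ‖a i‖ ^ 2) * N ^ 2 ≤ ∑ i ∈ s, ∑ j ∈ s, w i j :=
    calc 2 * (∑ i ∈ s, ‖a i‖ ^ 2) * N ^ 2
        = ∑ i ∈ s, ∑ j ∈ s, if i = j then 2 * (‖a i‖ ^ 2 * ‖v i‖ ^ 2) else 0 := by
          simp_rw [sum_ite_eq, mul_sum, sum_mul]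
          exact sum_congr rfl fun i hi => by rw [if_pos hi, hv i hi]; ring
      _ ≤ ∑ i ∈ s, ∑ j ∈ s, (re (conj (a i) * a j * ⟪v i, v j⟫_𝕜) + w i j) :=
          sum_le_sum fun i _ => sum_le_sum fun j _ => ite_le_re_add_norm_conj_mul_inner a v i j
      _ = ∑ i ∈ s, ∑ j ∈ s, w i j := by
          simp_rw [sum_add_distrib, ← norm_sum_smul_sq, h0, norm_zero]; ring
  have hw : ∀ i ∈ s, ∀ j ∈ s, w i j ≤ ‖a i‖ * ‖a j‖ * N ^ 2 := fun i hi j hj => by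
    have := norm_inner_le_norm (𝕜 := 𝕜) (v i) (v j)
    rw [hv i hi, hv j hj, ← sq] at this
    exact mul_le_mul_of_nonneg_left this (by positivity)
  have hup : ∑ i ∈ s, ∑ j ∈ s, w i j < (∑ i ∈ s, ‖a i‖) ^ 2 * N ^ 2 :=
    calc ∑ i ∈ s, ∑ j ∈ s, w i j < ∑ i ∈ s, ∑ j ∈ s, ‖a i‖ * ‖a j‖ * N ^ 2 := by
          refine sum_lt_sum (fun i hi => sum_le_sum fun j hj => hw i hi j hj) ⟨i, hi, ?_⟩
          refine sum_lt_sum (fun j hj => hw i hi j hj) ⟨j, hj, ?_⟩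
          have hlt : ‖⟪v i, v j⟫_𝕜‖ < N ^ 2 := by
            simpa only [hv i hi, hv j hj, ← sq] using
              (norm_inner_le_norm (v i) (v j)).lt_of_ne (hne i hi j hj hij)
          have : 0 < ‖a i‖ * ‖a j‖ := mul_pos (norm_pos_iff.2 (ha i hi)) (norm_pos_iff.2 (ha j hj))
          exact mul_lt_mul_of_pos_left hlt this
      _ = (∑ i ∈ s, ‖a i‖) ^ 2 * N ^ 2 := by
          rw [sq (∑ i ∈ s, ‖a i‖), sum_mul_sum, sum_mul]; simp_rw [sum_mul]
  nlinarith

end InnerProductSpace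

theorem Memℓp.comp_equiv {α β E : Type*} [NormedAddCommGroup E] {p : ℝ≥0∞} {f : α → E}
    (hf : Memℓp f p) (e : β ≃ α) : Memℓp (f ∘ e) p := by
  rcases p.trichotomy with rfl | rfl | hp
  · exact memℓp_zero (hf.finite_dsupport.preimage e.injective.injOn)
  · have := hf.bddAbove
    rw [← e.surjective.range_comp] at this
    exact memℓp_infty this
  · exact memℓp_gen ((e.summable_iff (f := fun i => ‖f i‖ ^ p.toReal)).2 (hf.summable hp))

namespace lp

variable {G E : Type*} [Group G] [NormedAddCommGroup E] {p : ℝ≥0∞}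

def translate (g : G) (f : lp (fun _ : G => E) p) : lp (fun _ : G => E) p :=
  ⟨fun x => f (g⁻¹ * x), (lp.memℓp f).comp_equiv (Equiv.mulLeft g⁻¹)⟩

@[simp]
theorem translate_apply (g : G) (f : lp (fun _ : G => E) p) (x : G) :
    translate g f x = f (g⁻¹ * x) := rfl

@[simp]
theorem translate_one (f : lp (fun _ : G => E) p) : translate 1 f = f :=
  lp.ext <| funext fun x => by simp

theorem translate_translate (g h : G) (f : lp (fun _ : G => E) p) :
    translate g (translate h f) = translate (g * h) f :=
  lp.ext <| funext fun x => by simp [mul_assoc]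

theorem translate_smul {𝕜 : Type*} [NormedRing 𝕜] [Module 𝕜 E] [IsBoundedSMul 𝕜 E] (g : G) (c : 𝕜)
    (f : lp (fun _ : G => E) p) : translate g (c • f) = c • translate g f :=
  rfl

theorem norm_translate (hp : 0 < p.toReal) (g : G) (f : lp (fun _ : G => E) p) :
    ‖translate g f‖ = ‖f‖ := by
  rw [lp.norm_eq_tsum_rpow hp, lp.norm_eq_tsum_rpow hp]
  exact congrArg (· ^ (1 / p.toReal)) ((Equiv.mulLeft g⁻¹).tsum_eq fun x => ‖f x‖ ^ p.toReal)

theorem translate_pow_eq_smul {𝕜 : Type*} [NormedRing 𝕜] [Module 𝕜 E] [IsBoundedSMul 𝕜 E]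
    {t : G} {c : 𝕜} {f : lp (fun _ : G => E) p} (h : translate t f = c • f) (n : ℕ) :
    translate (t ^ n) f = c ^ n • f := by
  induction n with
  | zero => exact lp.ext <| funext fun x => by simp
  | succ n ih => rw [pow_succ, ← translate_translate, h, translate_smul, ih, smul_smul, ← pow_succ']

theorem eq_zero_of_translate_eq_smul {𝕜 : Type*} [NormedField 𝕜] [NormedSpace 𝕜 E]
    [Fact (1 ≤ p)] (hp : 0 < p.toReal) {t : G} (ht : ¬IsOfFinOrder t) {c : 𝕜}
    {f : lp (fun _ : G => E) p} (h : translate t f = c • f) : f = 0 := by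
  by_contra hf
  have hc : ‖c‖ = 1 := by
    have := norm_translate hp t f
    rw [h, norm_smul] at this
    exact (mul_eq_right₀ (norm_ne_zero_iff.2 hf)).1 this
  obtain ⟨x, hx⟩ : ∃ x, f x ≠ 0 := by
    by_contra! h0
    exact hf (lp.ext (funext h0))
  have horbit : ∀ n : ℕ, ‖f ((t ^ n)⁻¹ * x)‖ ^ p.toReal = ‖f x‖ ^ p.toReal := fun n => by
    simpa only [translate_apply, lp.coeFn_smul, Pi.smul_apply, norm_smul, norm_pow, hc, one_pow,
      one_mul] using congrArg (fun f : lp (fun _ : G => E) p => ‖f x‖ ^ p.toReal)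
        (translate_pow_eq_smul h n)
  have hinj : Function.Injective fun n : ℕ => (t ^ n)⁻¹ * x := fun m n hmn =>
    injective_pow_iff_not_isOfFinOrder.2 ht (inv_injective (mul_right_cancel hmn))
  have hlim := (((lp.memℓp f).summable hp).comp_injective hinj).tendsto_atTop_zero
  simp only [Function.comp_def, horbit, tendsto_const_nhds_iff] at hlim
  exact hx (norm_eq_zero.1 ((Real.rpow_eq_zero (norm_nonneg _) hp.ne').1 hlim))

end lp

theorem smulL2_eq_coe_sum_smul_translate {G : Type*} [Group G] (α : MonoidAlgebra ℂ G)
    (β : lp (fun _ : G => ℂ) 2) :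
    smulL2 α β = ⇑(∑ g ∈ α.coeff.support, α.coeff g • lp.translate g β) := by
  ext x
  rw [lp.coeFn_sum, Finset.sum_apply]
  simp [smulL2]

/-- If `α ≠ 0` in `ℂG` for a torsion-free group `G` satisfies `2‖α‖₂² ≥ ‖α‖₁²`,
then `α` is not an analytical zero divisor. -/
theorem stmt_1 {G : Type*} [Group G] (hG : Monoid.IsTorsionFree G)
    (α : MonoidAlgebra ℂ G) (hα : α ≠ 0)
    (h : 2 * ∑ g ∈ α.coeff.support, ‖α.coeff g‖ ^ 2 ≥
      (∑ g ∈ α.coeff.support, ‖α.coeff g‖) ^ 2) :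
    ∀ β : lp (fun _ : G => ℂ) 2, β ≠ 0 → smulL2 α β ≠ 0 := by
  intro β hβ hαβ
  have hp : 0 < (2 : ℝ≥0∞).toReal := by norm_num
  have hsum : ∑ g ∈ α.coeff.support, α.coeff g • lp.translate g β = 0 :=
    lp.ext (by rw [← smulL2_eq_coe_sum_smul_translate, hαβ, lp.coeFn_zero])
  obtain ⟨g, -, k, -, hgk, hnorm⟩ := exists_ne_norm_inner_eq_of_sum_smul_eq_zero
    (norm_pos_iff.2 hβ) (fun g _ => lp.norm_translate hp g β)
    (Finsupp.support_nonempty_iff.2 (MonoidAlgebra.coeff_eq_zero.not.2 hα))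
    (fun g => Finsupp.mem_support_iff.1) h hsum
  have hg : lp.translate g β ≠ 0 := by
    rw [← norm_ne_zero_iff, lp.norm_translate hp]
    exact norm_ne_zero_iff.2 hβ
  obtain ⟨c, hc⟩ : ∃ c : ℂ, lp.translate k β = c • lp.translate g β :=
    Or.resolve_left (((norm_inner_eq_norm_tfae ℂ _ _).out 0 2).1 hnorm) hg
  have hcycle : lp.translate (g⁻¹ * k) β = c • β := by
    rw [← lp.translate_translate, hc, lp.translate_smul, lp.translate_translate, inv_mul_cancel,
      lp.translate_one]
  have htors : ¬IsOfFinOrder (g⁻¹ * k) := hG _ (mt inv_mul_eq_one.1 hgk)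
  exact hβ (lp.eq_zero_of_translate_eq_smul hp htors hcycle)
end

section
/- Let G be a group, let H be the subgroup of G generated by the support of an element α of the complex group algebra ℂH ⊆ ℂG (so α lies in the image of ℂH in ℂG). Then α is regular in ℂG if and only if α is regular in ℂH; equivalently, if α is a zero divisor in ℂG (there is a nonzero γ ∈ ℂG with αγ = 0), then there is a nonzero γ' ∈ ℂH with αγ' = 0, and conversely. -/
open scoped ENNReal

/-!
Left multiplication by an element supported on a subgroup `H` maps functions supported on a
right coset `H x` to functions supported on `H x`; for the coset `H` itself this says that
restricting to `H` commutes with left multiplication by `kH`. A witness `β ≠ 0` of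
`α β = 0` in `kG`, translated on the right so that it does not vanish at `1`, therefore
restricts to a witness in `kH`.
-/

namespace MonoidAlgebra

variable {k G : Type*} [Semiring k] [Group G] (H : Subgroup G)

theorem comapDomain_subtype_mapDomain_mul (a : k[H]) (b : k[G]) :
    comapDomain H.subtype H.subtype_injective (mapDomain H.subtype a * b) =
      a * comapDomain H.subtype H.subtype_injective b := by
  ext h
  rw [coeff_comapDomain, Finsupp.comapDomain_apply, coeff_mul_apply_left, coeff_mapDomain,
    Finsupp.sum_mapDomain_index_inj H.subtype_injective, coeff_mul_apply_left]
  refine Finsupp.sum_congr fun g _ => ?_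
  simp

theorem exists_comapDomain_subtype_mul_single_ne_zero {b : k[G]} (hb : b ≠ 0) :
    ∃ x : G, comapDomain H.subtype H.subtype_injective (b * single x 1) ≠ 0 := by
  obtain ⟨x, hx⟩ := Finsupp.ne_iff.mp (coeff_injective.ne hb)
  refine ⟨x⁻¹, fun h => hx ?_⟩
  simpa [coeff_mul_single_apply] using congr(($h).coeff 1)

theorem forall_mapDomain_subtype_mul_ne_zero_iff (a : k[H]) :
    (∀ b : k[G], b ≠ 0 → mapDomain H.subtype a * b ≠ 0) ↔ ∀ c : k[H], c ≠ 0 → a * c ≠ 0 := by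
  refine ⟨fun ha c hc hac => ?_, fun ha b hb hab => ?_⟩
  · refine ha _ ((mapDomain_injective H.subtype_injective).ne_iff' (mapDomain_zero _) |>.mpr hc) ?_
    rw [← mapDomain_mul, hac, mapDomain_zero]
  · obtain ⟨x, hx⟩ := exists_comapDomain_subtype_mul_single_ne_zero H hb
    refine ha _ hx ?_
    rw [← comapDomain_subtype_mapDomain_mul, ← mul_assoc, hab, zero_mul, comapDomain_zero]

end MonoidAlgebra

theorem stmt_2_general {G : Type*} [Group G] (α : MonoidAlgebra ℂ G)
    (H : Subgroup G)
    (α' : MonoidAlgebra ℂ H)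
    (hα' : Finsupp.mapDomain (Subtype.val : H → G) α'.coeff = α.coeff) :
    (∀ β : MonoidAlgebra ℂ G, β ≠ 0 → α * β ≠ 0) ↔
      (∀ γ : MonoidAlgebra ℂ H, γ ≠ 0 → α' * γ ≠ 0) := by
  obtain rfl : MonoidAlgebra.mapDomain H.subtype α' = α := MonoidAlgebra.coeff_injective hα'
  exact MonoidAlgebra.forall_mapDomain_subtype_mul_ne_zero_iff H α'

/-- `α ∈ ℂG` is regular in `ℂG` iff it is regular in `ℂH`, where
`H = ⟨supp α⟩` and `α'` is the element of `ℂH` corresponding to `α`. -/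
theorem stmt_2 {G : Type*} [Group G] (α : MonoidAlgebra ℂ G)
    (H : Subgroup G) (hH : H = Subgroup.closure (α.coeff.support : Set G))
    (α' : MonoidAlgebra ℂ H)
    (hα' : Finsupp.mapDomain (Subtype.val : H → G) α'.coeff = α.coeff) :
    (∀ β : MonoidAlgebra ℂ G, β ≠ 0 → α * β ≠ 0) ↔
      (∀ γ : MonoidAlgebra ℂ H, γ ≠ 0 → α' * γ ≠ 0) :=
  stmt_2_general α H α' hα'
end

section
/- Let N be a normal subgroup of a group G such that every nonzero element of ℂN is regular in ℂN. Let t ∈ G be an element whose image tN in the quotient group G/N has infinite order. Then for all nonzero α, β ∈ ℂN, the element α + βt is regular in ℂG (where α, β are viewed in ℂG via the embedding ℂN ↪ ℂG). -/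
/-!
Grade `ℂG` by `G ⧸ N`. For `γ ≠ 0`, the cosets meeting the support of `γ` form a finite set `S`,
and since `tN` has infinite order some `d ∈ S` has `(tN) d ∉ S`. In degree `(tN) d` the product
`αγ` has no component (`α ∈ ℂN` preserves degrees), while `βtγ` has component `β t γ_d`, where
`γ_d ≠ 0` is the degree-`d` part of `γ`. Writing `t γ_d = μ g` with `0 ≠ μ ∈ ℂN` and `g ∈ G`,
this is `(βμ) g ≠ 0` by regularity in `ℂN`.
-/

open scoped ENNReal

/-- The natural embedding of `ℂN` into `ℂG` for a subgroup `N ≤ G`. -/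
noncomputable def embCG {G : Type*} [Group G] (N : Subgroup G) (α : MonoidAlgebra ℂ N) :
    MonoidAlgebra ℂ G :=
  MonoidAlgebra.ofCoeff (Finsupp.mapDomain (Subtype.val : N → G) α.coeff)

lemma exists_mem_mul_notMem_of_not_isOfFinOrder {Q : Type*} [Group Q] {q : Q}
    (hq : ¬IsOfFinOrder q) {S : Finset Q} (hS : S.Nonempty) : ∃ d ∈ S, q * d ∉ S := by
  by_contra! h
  obtain ⟨d, hd⟩ := hS
  have hmem : ∀ n : ℕ, q ^ n * d ∈ S := fun n => by
    induction n with
    | zero => simpa using hd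
    | succ n ih => simpa [pow_succ', mul_assoc] using h _ ih
  have hinj : Function.Injective fun n : ℕ => q ^ n * d :=
    (mul_left_injective d).comp (injective_pow_iff_not_isOfFinOrder.mpr hq)
  exact Set.infinite_of_injective_forall_mem hinj hmem S.finite_toSet

namespace MonoidAlgebra

open scoped Classical

variable {k G Q : Type*} [Semiring k] [Group G] [Group Q] (φ : G →* Q)

def IsHomogeneous (q : Q) (f : MonoidAlgebra k G) : Prop :=
  ∀ x ∈ f.coeff.support, φ x = q

noncomputable def homogeneousPart (q : Q) (f : MonoidAlgebra k G) : MonoidAlgebra k G :=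
  ofCoeff (f.coeff.filter fun x => φ x = q)

variable {φ}

lemma coeff_homogeneousPart (q : Q) (f : MonoidAlgebra k G) (x : G) :
    (homogeneousPart φ q f).coeff x = if φ x = q then f.coeff x else 0 :=
  Finsupp.filter_apply _ _ _

lemma homogeneousPart_add (q : Q) (f g : MonoidAlgebra k G) :
    homogeneousPart φ q (f + g) = homogeneousPart φ q f + homogeneousPart φ q g :=
  congrArg ofCoeff Finsupp.filter_add

lemma homogeneousPart_zero (q : Q) : homogeneousPart φ q (0 : MonoidAlgebra k G) = 0 :=
  congrArg ofCoeff (Finsupp.filter_zero _)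

lemma homogeneousPart_eq_zero {q : Q} {f : MonoidAlgebra k G}
    (hf : ∀ x ∈ f.coeff.support, φ x ≠ q) : homogeneousPart φ q f = 0 := by
  ext x
  rw [coeff_homogeneousPart]
  split_ifs with hx
  · exact Finsupp.notMem_support_iff.mp fun hmem => hf x hmem hx
  · rfl

lemma isHomogeneous_homogeneousPart (q : Q) (f : MonoidAlgebra k G) :
    IsHomogeneous φ q (homogeneousPart φ q f) := by
  intro x hx
  by_contra hne
  rw [Finsupp.mem_support_iff, coeff_homogeneousPart, if_neg hne] at hx
  exact hx rfl

lemma coeff_homogeneousPart_self (f : MonoidAlgebra k G) (x : G) :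
    (homogeneousPart φ (φ x) f).coeff x = f.coeff x := by
  rw [coeff_homogeneousPart, if_pos rfl]

lemma isHomogeneous_of (g : G) : IsHomogeneous φ (φ g) (of k G g) := by
  intro x hx
  rw [Finset.mem_singleton.mp (Finsupp.support_single_subset hx)]

lemma IsHomogeneous.mul {p q : Q} {f g : MonoidAlgebra k G} (hf : IsHomogeneous φ p f)
    (hg : IsHomogeneous φ q g) : IsHomogeneous φ (p * q) (f * g) := by
  intro z hz
  obtain ⟨x, hx, y, hy, rfl⟩ := Finset.mem_mul.mp (support_coeff_mul_subset f g hz)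
  rw [map_mul, hf x hx, hg y hy]

lemma homogeneousPart_mul_of_isHomogeneous {p : Q} {f : MonoidAlgebra k G}
    (hf : IsHomogeneous φ p f) (q : Q) (g : MonoidAlgebra k G) :
    homogeneousPart φ (p * q) (f * g) = f * homogeneousPart φ q g := by
  ext x
  rw [coeff_homogeneousPart, coeff_mul_apply_left, coeff_mul_apply_left]
  have hfiber : ∀ h ∈ f.coeff.support, φ (h⁻¹ * x) = q ↔ φ x = p * q := by
    intro h hh
    rw [map_mul, map_inv, hf h hh, inv_mul_eq_iff_eq_mul]
  split_ifs with hx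
  · exact Finsupp.sum_congr fun h hh => by
      rw [coeff_homogeneousPart, if_pos ((hfiber h hh).mpr hx)]
  · refine (Finset.sum_eq_zero fun h hh => ?_).symm
    dsimp only
    rw [coeff_homogeneousPart, if_neg (mt (hfiber h hh).mp hx), mul_zero]

end MonoidAlgebra

open MonoidAlgebra

section embCG

variable {G : Type*} [Group G] {N : Subgroup G}

lemma embCG_injective : Function.Injective (embCG N) :=
  mapDomain_injective Subtype.val_injective

lemma embCG_zero : embCG N (0 : MonoidAlgebra ℂ N) = 0 :=
  mapDomain_zero _

lemma embCG_mul (a b : MonoidAlgebra ℂ N) : embCG N (a * b) = embCG N a * embCG N b :=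
  mapDomain_mul N.subtype a b

lemma exists_embCG_eq {f : MonoidAlgebra ℂ G} (hf : ∀ x ∈ f.coeff.support, x ∈ N) :
    ∃ μ, embCG N μ = f := by
  classical
  refine ⟨ofCoeff (f.coeff.subtypeDomain (· ∈ N)), coeff_injective ?_⟩
  change Finsupp.mapDomain Subtype.val (f.coeff.subtypeDomain (· ∈ N)) = f.coeff
  rw [← Function.Embedding.coe_subtype, ← Finsupp.embDomain_eq_mapDomain,
    ← Finsupp.extendDomain_eq_embDomain_subtype, Finsupp.extendDomain_subtypeDomain _ hf]

variable [N.Normal]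

lemma isHomogeneous_embCG (a : MonoidAlgebra ℂ N) :
    IsHomogeneous (QuotientGroup.mk' N) 1 (embCG N a) := by
  classical
  intro x hx
  obtain ⟨n, -, rfl⟩ := Finset.mem_image.mp (Finsupp.mapDomain_support hx)
  exact (QuotientGroup.eq_one_iff _).mpr n.2

lemma exists_embCG_mul_of {f : MonoidAlgebra ℂ G} {g : G}
    (hf : IsHomogeneous (QuotientGroup.mk' N) (QuotientGroup.mk' N g) f) :
    ∃ μ, f = embCG N μ * of ℂ G g := by
  have hsupp : ∀ x ∈ (f * of ℂ G g⁻¹).coeff.support, x ∈ N := by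
    intro x hx
    rw [Finsupp.mem_support_iff, of_apply, coeff_mul_single_apply, inv_inv, mul_one] at hx
    have := hf _ (Finsupp.mem_support_iff.mpr hx)
    rwa [map_mul, mul_eq_right, QuotientGroup.mk'_apply, QuotientGroup.eq_one_iff] at this
  obtain ⟨μ, hμ⟩ := exists_embCG_eq hsupp
  refine ⟨μ, ?_⟩
  rw [hμ, mul_assoc, ← map_mul, inv_mul_cancel, map_one, mul_one]

lemma embCG_mul_ne_zero
    (hN : ∀ α : MonoidAlgebra ℂ N, α ≠ 0 → ∀ β : MonoidAlgebra ℂ N, β ≠ 0 → α * β ≠ 0)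
    {β : MonoidAlgebra ℂ N} (hβ : β ≠ 0) {δ : MonoidAlgebra ℂ G} (hδ : δ ≠ 0) {g : G}
    (hδg : IsHomogeneous (QuotientGroup.mk' N) (QuotientGroup.mk' N g) δ) :
    embCG N β * δ ≠ 0 := by
  obtain ⟨μ, rfl⟩ := exists_embCG_mul_of hδg
  have hunit : IsUnit (of ℂ G g) := (Group.isUnit g).map _
  have hμ : μ ≠ 0 := by
    rintro rfl
    exact hδ (by rw [embCG_zero, zero_mul])
  rw [← mul_assoc, ← embCG_mul, ne_eq, hunit.mul_left_eq_zero]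
  intro h
  exact hN β hβ μ hμ (embCG_injective (h.trans embCG_zero.symm))

end embCG

theorem stmt_5_general {G : Type*} [Group G] (N : Subgroup G) [N.Normal]
    (hN : ∀ α : MonoidAlgebra ℂ N, α ≠ 0 → ∀ β : MonoidAlgebra ℂ N, β ≠ 0 → α * β ≠ 0)
    (t : G) (ht : ¬ IsOfFinOrder (QuotientGroup.mk t : G ⧸ N))
    (α β : MonoidAlgebra ℂ N) (hβ : β ≠ 0) :
    ∀ γ : MonoidAlgebra ℂ G, γ ≠ 0 →
      (embCG N α +
        embCG N β *
          MonoidAlgebra.of ℂ G t) * γ ≠ 0 := by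
  classical
  intro γ hγ hzero
  set φ := QuotientGroup.mk' N
  obtain ⟨g, hg, htg⟩ : ∃ g ∈ γ.coeff.support, φ t * φ g ∉ γ.coeff.support.image φ := by
    have hS : (γ.coeff.support.image φ).Nonempty := by simpa using hγ
    obtain ⟨_, hd, htd⟩ := exists_mem_mul_notMem_of_not_isOfFinOrder ht hS
    obtain ⟨g, hg, rfl⟩ := Finset.mem_image.mp hd
    exact ⟨g, hg, htd⟩
  have hα_part : homogeneousPart φ (φ t * φ g) (embCG N α * γ) = 0 := by
    rw [← one_mul (φ t * φ g), homogeneousPart_mul_of_isHomogeneous (isHomogeneous_embCG α),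
      homogeneousPart_eq_zero fun x hx hxtg => htg (Finset.mem_image.mpr ⟨x, hx, hxtg⟩), mul_zero]
  have hβt : IsHomogeneous φ (φ t) (embCG N β * of ℂ G t) := by
    rw [← one_mul (φ t)]
    exact (isHomogeneous_embCG β).mul (isHomogeneous_of t)
  have hβ_part : homogeneousPart φ (φ t * φ g) (embCG N β * of ℂ G t * γ) =
      embCG N β * (of ℂ G t * homogeneousPart φ (φ g) γ) := by
    rw [homogeneousPart_mul_of_isHomogeneous hβt, mul_assoc]
  have hγg : homogeneousPart φ (φ g) γ ≠ 0 := fun h =>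
    Finsupp.mem_support_iff.mp hg (by rw [← coeff_homogeneousPart_self (φ := φ), h]; rfl)
  refine embCG_mul_ne_zero hN hβ (g := t * g)
    (((Group.isUnit t).map (of ℂ G)).mul_right_eq_zero.not.mpr hγg) ?_ ?_
  · rw [map_mul]
    exact (isHomogeneous_of t).mul (isHomogeneous_homogeneousPart _ _)
  · have h := congrArg (homogeneousPart φ (φ t * φ g)) hzero
    rwa [add_mul, homogeneousPart_add, hα_part, hβ_part, zero_add, homogeneousPart_zero] at h

/-- If `N ⊴ G` has only regular nonzero elements in `ℂN` and `tN` has infinite order in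
`G/N`, then `α + βt` is regular in `ℂG` for all nonzero `α, β ∈ ℂN`. -/
theorem stmt_5 {G : Type*} [Group G] (N : Subgroup G) [N.Normal]
    (hN : ∀ α : MonoidAlgebra ℂ N, α ≠ 0 → ∀ β : MonoidAlgebra ℂ N, β ≠ 0 → α * β ≠ 0)
    (t : G) (ht : ¬ IsOfFinOrder (QuotientGroup.mk t : G ⧸ N))
    (α β : MonoidAlgebra ℂ N) (hα : α ≠ 0) (hβ : β ≠ 0) :
    ∀ γ : MonoidAlgebra ℂ G, γ ≠ 0 →
      (embCG N α +
        embCG N β *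
          MonoidAlgebra.of ℂ G t) * γ ≠ 0 :=
  stmt_5_general N hN t ht α β hβ
end

section
/- Let G be a group, let g ∈ G be an element of infinite order, and let a, b be nonzero complex numbers. Then a·1 + b·g ∈ ℂG is not an analytical zero divisor: there is no nonzero γ ∈ ℓ²(G) with (a·1 + b·g)γ = 0. -/
/-! Evaluating `(a + b g)γ = 0` at each point gives `a γ(x) + b γ(g⁻¹x) = 0`, so `|γ|` does not
decrease along the orbits of `g` (if `|a| ≤ |b|`) or of `g⁻¹` (if `|b| ≤ |a|`). As `g` has
infinite order these orbits are infinite, and a square-summable function tends to zero along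
any infinite orbit, so `γ` vanishes everywhere. -/

open scoped ENNReal

open Filter Topology

theorem lp.eq_zero_of_norm_le_norm_mul {G E : Type*} [Group G] [NormedAddCommGroup E]
    {p : ℝ≥0∞} (hp : 0 < p.toReal) {h : G} (hh : ¬ IsOfFinOrder h) (f : lp (fun _ : G => E) p)
    (hle : ∀ x, ‖f x‖ ≤ ‖f (h * x)‖) : f = 0 := by
  ext x
  have horbit : Function.Injective (fun n : ℕ => h ^ n * x) :=
    fun m n hmn => injective_pow_iff_not_isOfFinOrder.mpr hh (mul_right_cancel hmn)
  have htend : Tendsto (fun n : ℕ => ‖f (h ^ n * x)‖ ^ p.toReal) atTop (𝓝 0) := by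
    rw [← Nat.cofinite_eq_atTop]
    exact ((lp.memℓp f).summable hp).tendsto_cofinite_zero.comp horbit.tendsto_cofinite
  have hmono : ∀ n : ℕ, ‖f x‖ ^ p.toReal ≤ ‖f (h ^ n * x)‖ ^ p.toReal := by
    intro n
    gcongr
    induction n with
    | zero => simp
    | succ n ih => exact ih.trans ((hle _).trans_eq (by rw [← mul_assoc, ← pow_succ']))
  by_contra hx
  exact (ge_of_tendsto' htend hmono).not_gt (Real.rpow_pos_of_pos (norm_pos_iff.mpr hx) _)

theorem norm_le_norm_of_mul_add_mul_eq_zero {𝕜 : Type*} [NormedDivisionRing 𝕜] {a b u v : 𝕜}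
    (ha : a ≠ 0) (hab : ‖a‖ ≤ ‖b‖) (h : a * u + b * v = 0) : ‖v‖ ≤ ‖u‖ := by
  have hnorm : ‖a‖ * ‖u‖ = ‖b‖ * ‖v‖ := by
    rw [← norm_mul, eq_neg_of_add_eq_zero_left h, norm_neg, norm_mul]
  have : ‖a‖ * ‖v‖ ≤ ‖a‖ * ‖u‖ := hnorm ▸ by gcongr
  exact le_of_mul_le_mul_left this (norm_pos_iff.mpr ha)

theorem smulL2_apply_of_support_subset {G : Type*} [Group G] (α : MonoidAlgebra ℂ G)
    (β : lp (fun _ : G => ℂ) 2) {s : Finset G} (hs : α.coeff.support ⊆ s) (x : G) :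
    smulL2 α β x = ∑ g ∈ s, α.coeff g * β (g⁻¹ * x) :=
  Finset.sum_subset hs fun g _ hg => by rw [Finsupp.notMem_support_iff.mp hg, zero_mul]

theorem smulL2_smul_one_add_smul_of_apply {G : Type*} [Group G] {g : G} (hg : g ≠ 1) (a b : ℂ)
    (β : lp (fun _ : G => ℂ) 2) (x : G) :
    smulL2 (a • (1 : MonoidAlgebra ℂ G) + b • MonoidAlgebra.of ℂ G g) β x =
      a * β x + b * β (g⁻¹ * x) := by
  classical
  have hcoeff : (a • (1 : MonoidAlgebra ℂ G) + b • MonoidAlgebra.of ℂ G g).coeff =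
      Finsupp.single 1 a + Finsupp.single g b := by
    simp [MonoidAlgebra.coeff_add, MonoidAlgebra.one_def, MonoidAlgebra.coeff_single]
  rw [smulL2_apply_of_support_subset _ β (hcoeff ▸ Finsupp.support_add.trans
      (Finset.union_subset_union Finsupp.support_single_subset Finsupp.support_single_subset)),
    hcoeff, Finset.sum_union (by simpa using hg.symm)]
  simp [Finsupp.single_apply, hg, hg.symm]

/-- For an element `g` of infinite order and nonzero `a, b ∈ ℂ`, the element
`a·1 + b·g ∈ ℂG` is not an analytical zero divisor. -/
theorem stmt_7 {G : Type*} [Group G] (g : G) (hg : ¬ IsOfFinOrder g)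
    (a b : ℂ) (ha : a ≠ 0) (hb : b ≠ 0) :
    ¬ ∃ γ : lp (fun _ : G => ℂ) 2, γ ≠ 0 ∧
      smulL2 (a • (1 : MonoidAlgebra ℂ G) + b • MonoidAlgebra.of ℂ G g) γ = 0 := by
  rintro ⟨γ, hγ, hzero⟩
  have hg1 : g ≠ 1 := fun h => hg (h ▸ IsOfFinOrder.one)
  have hrel : ∀ x, a * γ x + b * γ (g⁻¹ * x) = 0 := fun x => by
    rw [← smulL2_smul_one_add_smul_of_apply hg1, hzero, Pi.zero_apply]
  refine hγ ?_
  rcases le_total ‖a‖ ‖b‖ with hab | hba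
  · refine lp.eq_zero_of_norm_le_norm_mul (by norm_num) hg γ fun x => ?_
    exact norm_le_norm_of_mul_add_mul_eq_zero ha hab (by simpa using hrel (g * x))
  · refine lp.eq_zero_of_norm_le_norm_mul (by norm_num) (by rwa [isOfFinOrder_inv_iff]) γ
      fun x => ?_
    exact norm_le_norm_of_mul_add_mul_eq_zero hb hba (by rw [add_comm]; exact hrel x)
end

section
/- Let G be a group. An element α ∈ ℂG is an analytical zero divisor if and only if α*α is an analytical zero divisor. -/
/-! `α ∈ ℂG` acts on `ℓ²(G)` through the left regular representation, and `α*` acts as the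
Hilbert-space adjoint of `α`. Hence `α*αβ = 0` forces `‖αβ‖² = ⟪αβ, αβ⟫ = ⟪β, α*αβ⟫ = 0`;
the converse is trivial. -/

open scoped ENNReal InnerProductSpace

lemma apply_eq_zero_of_adjoint_apply_eq_zero {𝕜 E F : Type*} [RCLike 𝕜]
    [NormedAddCommGroup E] [InnerProductSpace 𝕜 E] [NormedAddCommGroup F] [InnerProductSpace 𝕜 F]
    (A : E → F) (B : F → E) (hAB : ∀ x y, ⟪A x, y⟫_𝕜 = ⟪x, B y⟫_𝕜) {x : E} (hx : B (A x) = 0) :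
    A x = 0 :=
  inner_self_eq_zero.1 (by rw [hAB, hx, inner_zero_right])

local notation "ℓ²[" G "]" => lp (fun _ : G => ℂ) 2

namespace GroupAlgebra

variable {G : Type*} [Group G]

lemma memℓp_two_comp_mulLeft {E : Type*} [NormedAddCommGroup E] (g : G)
    (β : lp (fun _ : G => E) 2) : Memℓp (fun x => β (g * x)) 2 :=
  memℓp_gen <| (Equiv.mulLeft g).summable_iff.2 <| (lp.memℓp β).summable (by norm_num)

noncomputable def leftTranslate (g : G) : ℓ²[G] →ₗ[ℂ] ℓ²[G] where
  toFun β := ⟨fun x => β (g⁻¹ * x), memℓp_two_comp_mulLeft g⁻¹ β⟩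
  map_add' _ _ := rfl
  map_smul' _ _ := rfl

@[simp] lemma leftTranslate_apply (g : G) (β : ℓ²[G]) (x : G) :
    leftTranslate g β x = β (g⁻¹ * x) := rfl

noncomputable def leftRegular : G →* Module.End ℂ ℓ²[G] where
  toFun := leftTranslate
  map_one' := by ext β x; simp
  map_mul' g h := by ext β x; simp [mul_assoc]

noncomputable def leftRegularAlgHom : MonoidAlgebra ℂ G →ₐ[ℂ] Module.End ℂ ℓ²[G] :=
  MonoidAlgebra.lift ℂ _ G leftRegular

lemma leftRegularAlgHom_apply (α : MonoidAlgebra ℂ G) (β : ℓ²[G]) :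
    leftRegularAlgHom α β = ∑ g ∈ α.coeff.support, α.coeff g • leftTranslate g β := by
  simp only [leftRegularAlgHom, MonoidAlgebra.lift_apply, Finsupp.sum, LinearMap.sum_apply,
    LinearMap.smul_apply]
  rfl

lemma leftRegularAlgHom_adj_apply (α : MonoidAlgebra ℂ G) (β : ℓ²[G]) :
    leftRegularAlgHom (MonoidAlgebra.adj α) β =
      ∑ g ∈ α.coeff.support, starRingEnd ℂ (α.coeff g) • leftTranslate g⁻¹ β := by
  rw [leftRegularAlgHom, MonoidAlgebra.lift_apply, MonoidAlgebra.adj, MonoidAlgebra.coeff_ofCoeff,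
    Finsupp.sum_mapRange_index (fun _ => by simp), Finsupp.sum_equivMapDomain, Finsupp.sum]
  simp only [LinearMap.coe_sum, Finset.sum_apply, LinearMap.smul_apply]
  rfl

lemma smulL2_eq_leftRegularAlgHom (α : MonoidAlgebra ℂ G) (β : ℓ²[G]) :
    smulL2 α β = ⇑(leftRegularAlgHom α β) := by
  ext x
  rw [leftRegularAlgHom_apply, lp.coeFn_sum, Finset.sum_apply]
  rfl

lemma inner_leftTranslate_left (g : G) (β γ : ℓ²[G]) :
    ⟪leftTranslate g β, γ⟫_ℂ = ⟪β, leftTranslate g⁻¹ γ⟫_ℂ := by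
  rw [lp.inner_eq_tsum, lp.inner_eq_tsum, ← (Equiv.mulLeft g).tsum_eq]
  simp [RCLike.inner_apply]

lemma inner_leftRegularAlgHom_left (α : MonoidAlgebra ℂ G) (β γ : ℓ²[G]) :
    ⟪leftRegularAlgHom α β, γ⟫_ℂ = ⟪β, leftRegularAlgHom (MonoidAlgebra.adj α) γ⟫_ℂ := by
  rw [leftRegularAlgHom_apply, leftRegularAlgHom_adj_apply, sum_inner, inner_sum]
  simp only [inner_smul_left, inner_smul_right, inner_leftTranslate_left]

lemma smulL2_eq_zero_iff (α : MonoidAlgebra ℂ G) (β : ℓ²[G]) :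
    smulL2 α β = 0 ↔ leftRegularAlgHom α β = 0 := by
  rw [smulL2_eq_leftRegularAlgHom, ← lp.coeFn_zero]
  exact ⟨lp.ext, congrArg _⟩

end GroupAlgebra

/-- `α ∈ ℂG` is an analytical zero divisor iff `α*α` is. -/
theorem stmt_9 {G : Type*} [Group G] (α : MonoidAlgebra ℂ G) :
    (∃ β : lp (fun _ : G => ℂ) 2, β ≠ 0 ∧ smulL2 α β = 0) ↔
      (∃ β : lp (fun _ : G => ℂ) 2, β ≠ 0 ∧ smulL2 (MonoidAlgebra.adj α * α) β = 0) := by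
  have hker (β : ℓ²[G]) : smulL2 α β = 0 ↔ smulL2 (MonoidAlgebra.adj α * α) β = 0 := by
    rw [GroupAlgebra.smulL2_eq_zero_iff, GroupAlgebra.smulL2_eq_zero_iff, map_mul,
      Module.End.mul_apply]
    refine ⟨fun h => by rw [h, map_zero], ?_⟩
    exact apply_eq_zero_of_adjoint_apply_eq_zero _ _ (GroupAlgebra.inner_leftRegularAlgHom_left α)
  simp only [hker]
end

section
/- Let G be a torsion-free group and let α ∈ ℂG be a nonzero golden element (i.e. α is self-adjoint with Υ(α) = a_1 − ∑_{g≠1} |a_g| ≥ 0). Then α is regular in ℂG: αβ ≠ 0 for every nonzero β ∈ ℂG. -/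
open scoped ENNReal

/-! If `αβ = 0` with `β ≠ 0`, pair with `β`: `0 = ⟨αβ, β⟩ = ∑_g a_g ⟨λ_g β, β⟩`. The term at
`g = 1` is `a_1 ‖β‖²`. For `g ≠ 1`, `g⁻¹` has infinite order, so it cannot map the finite set
`supp β` into itself; the resulting defect in the AM-GM bound
`|β(g⁻¹x) β(x)| ≤ (|β(g⁻¹x)|² + |β(x)|²) / 2` gives `|⟨λ_g β, β⟩| < ‖β‖²`. Hence
`Re ⟨αβ, β⟩ > Υ(α) ‖β‖² ≥ 0` as soon as `α` has a coefficient off `1`; otherwise `α` is a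
nonzero scalar. -/

open scoped ComplexConjugate
open Finset MonoidAlgebra

section Translation

variable {G : Type*} [Group G]

lemma Finset.sum_comp_mul_left_le (s : Finset G) {h : G → ℝ} (h_nonneg : ∀ x, 0 ≤ h x)
    (h_supp : ∀ x ∉ s, h x = 0) (g : G) : ∑ x ∈ s, h (g * x) ≤ ∑ x ∈ s, h x := by
  classical
  calc ∑ x ∈ s, h (g * x) = ∑ y ∈ s.image (g * ·), h y :=
        (sum_image fun _ _ _ _ => mul_left_cancel).symm
    _ ≤ ∑ y ∈ s.image (g * ·) ∪ s, h y :=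
        sum_le_sum_of_subset_of_nonneg subset_union_left fun y _ _ => h_nonneg y
    _ = ∑ y ∈ s, h y := (sum_subset subset_union_right fun y _ hy => h_supp y hy).symm

lemma Finset.Nonempty.exists_mul_notMem_of_not_isOfFinOrder {s : Finset G} (hs : s.Nonempty)
    {g : G} (hg : ¬IsOfFinOrder g) : ∃ x ∈ s, g * x ∉ s := by
  by_contra! hclosed
  obtain ⟨x, hx⟩ := hs
  have horbit : ∀ n : ℕ, g ^ n * x ∈ s := by
    intro n
    induction n with
    | zero => simpa using hx
    | succ n ih => simpa [pow_succ', mul_assoc] using hclosed _ ih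
  have hinj : Function.Injective fun n : ℕ => g ^ n * x := fun _ _ hmn =>
    injective_pow_iff_not_isOfFinOrder.mpr hg (mul_right_cancel hmn)
  exact Set.infinite_of_injective_forall_mem hinj horbit s.finite_toSet

end Translation

namespace Finsupp

variable {G : Type*} [Group G]

/-- The inner product `⟨λ_g f, f⟩` in `ℓ²(G)`. -/
noncomputable def autocorrelation (f : G →₀ ℂ) (g : G) : ℂ :=
  ∑ x ∈ f.support, f (g⁻¹ * x) * conj (f x)

lemma autocorrelation_one (f : G →₀ ℂ) :
    f.autocorrelation 1 = ((∑ x ∈ f.support, ‖f x‖ ^ 2 : ℝ) : ℂ) := by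
  simp [autocorrelation, Complex.mul_conj, Complex.normSq_eq_norm_sq]

lemma norm_autocorrelation_add_le (f : G →₀ ℂ) (g : G) :
    ‖f.autocorrelation g‖ + ∑ x ∈ f.support, (‖f (g⁻¹ * x)‖ - ‖f x‖) ^ 2 / 2 ≤
      ∑ x ∈ f.support, ‖f x‖ ^ 2 := by
  have htranslate : ∑ x ∈ f.support, ‖f (g⁻¹ * x)‖ ^ 2 ≤ ∑ x ∈ f.support, ‖f x‖ ^ 2 :=
    f.support.sum_comp_mul_left_le (h := fun x => ‖f x‖ ^ 2) (fun _ => by positivity)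
      (fun x hx => by simp [notMem_support_iff.mp hx]) g⁻¹
  calc ‖f.autocorrelation g‖ + ∑ x ∈ f.support, (‖f (g⁻¹ * x)‖ - ‖f x‖) ^ 2 / 2
      ≤ ∑ x ∈ f.support, ‖f (g⁻¹ * x)‖ * ‖f x‖
          + ∑ x ∈ f.support, (‖f (g⁻¹ * x)‖ - ‖f x‖) ^ 2 / 2 := by
        gcongr
        exact (norm_sum_le _ _).trans_eq (by simp)
    _ = (∑ x ∈ f.support, ‖f (g⁻¹ * x)‖ ^ 2 + ∑ x ∈ f.support, ‖f x‖ ^ 2) / 2 := by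
        rw [← sum_add_distrib, ← sum_add_distrib, sum_div]
        exact Finset.sum_congr rfl fun _ _ => by ring
    _ ≤ ∑ x ∈ f.support, ‖f x‖ ^ 2 := by linarith

lemma norm_autocorrelation_lt (f : G →₀ ℂ) {g x : G} (hx : x ∈ f.support)
    (hgx : g⁻¹ * x ∉ f.support) : ‖f.autocorrelation g‖ < ∑ x ∈ f.support, ‖f x‖ ^ 2 := by
  have hdefect : 0 < ∑ y ∈ f.support, (‖f (g⁻¹ * y)‖ - ‖f y‖) ^ 2 / 2 :=
    Finset.sum_pos' (fun _ _ => by positivity)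
      ⟨x, hx, by simp [notMem_support_iff.mp hgx, mem_support_iff.mp hx]⟩
  linarith [f.norm_autocorrelation_add_le g]

lemma norm_autocorrelation_lt_of_not_isOfFinOrder {f : G →₀ ℂ} (hf : f ≠ 0) {g : G}
    (hg : ¬IsOfFinOrder g) : ‖f.autocorrelation g‖ < ∑ x ∈ f.support, ‖f x‖ ^ 2 := by
  obtain ⟨x, hx, hgx⟩ := (support_nonempty_iff.mpr hf).exists_mul_notMem_of_not_isOfFinOrder
    (isOfFinOrder_inv_iff.not.mpr hg)
  exact f.norm_autocorrelation_lt hx hgx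

end Finsupp

namespace MonoidAlgebra

lemma mul_ne_zero_of_support_subset_one {R M : Type*} [Semiring R] [NoZeroDivisors R] [Monoid M]
    {α β : MonoidAlgebra R M} (hα : α ≠ 0) (hβ : β ≠ 0) (hα_supp : α.coeff.support ⊆ {1}) :
    α * β ≠ 0 := by
  obtain ⟨a, ha⟩ := Finsupp.support_subset_singleton'.mp hα_supp
  obtain rfl : α = single 1 a := coeff_inj.mp ha
  obtain ⟨x, hx⟩ := Finsupp.support_nonempty_iff.mpr (coeff_eq_zero.not.mpr hβ)
  intro hαβ
  have hcoeff := congr(($hαβ).coeff x)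
  rw [coeff_single_one_mul] at hcoeff
  simp_all

variable {G : Type*} [Group G]

lemma sum_coeff_mul_mul_conj (α β : MonoidAlgebra ℂ G) :
    ∑ x ∈ β.coeff.support, (α * β).coeff x * conj (β.coeff x) =
      ∑ g ∈ α.coeff.support, α.coeff g * β.coeff.autocorrelation g := by
  simp_rw [coeff_mul_apply_left, Finsupp.sum, sum_mul, Finsupp.autocorrelation, mul_sum,
    mul_assoc]
  exact sum_comm

lemma re_sum_coeff_mul_pos_of_upsilon_nonneg [DecidableEq G] {α : MonoidAlgebra ℂ G}
    (hα : 0 ≤ Upsilon α) {c : G → ℂ} {N : ℝ} (hc_one : c 1 = N) (hc : ∀ g ≠ 1, ‖c g‖ < N)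
    {g₀ : G} (hg₀ : g₀ ∈ α.coeff.support) (hg₀_one : g₀ ≠ 1) :
    0 < (∑ g ∈ α.coeff.support, α.coeff g * c g).re := by
  have hN : 0 ≤ N := (norm_nonneg _).trans (hc g₀ hg₀_one).le
  have hsplit : ∑ g ∈ α.coeff.support, α.coeff g * c g =
      α.coeff 1 * N + ∑ g ∈ α.coeff.support.erase 1, α.coeff g * c g := by
    rw [← hc_one]
    by_cases h1 : 1 ∈ α.coeff.support
    · exact (add_sum_erase _ _ h1).symm
    · rw [erase_eq_of_notMem h1, Finsupp.notMem_support_iff.mp h1, zero_mul, zero_add]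
  have hterm : ∀ g ∈ α.coeff.support.erase 1, -(‖α.coeff g‖ * N) < (α.coeff g * c g).re := by
    intro g hg
    obtain ⟨hg1, hg⟩ := mem_erase.mp hg
    have hαg : 0 < ‖α.coeff g‖ := norm_pos_iff.mpr (Finsupp.mem_support_iff.mp hg)
    calc -(‖α.coeff g‖ * N) < -‖α.coeff g * c g‖ := by
          rw [norm_mul, neg_lt_neg_iff]; exact mul_lt_mul_of_pos_left (hc g hg1) hαg
      _ ≤ (α.coeff g * c g).re := neg_le_of_abs_le (Complex.abs_re_le_norm _)
  calc 0 ≤ N * Upsilon α := mul_nonneg hN hα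
    _ = (α.coeff 1).re * N + ∑ g ∈ α.coeff.support.erase 1, -(‖α.coeff g‖ * N) := by
        rw [Upsilon, sum_neg_distrib, ← sum_mul]; ring
    _ < (α.coeff 1).re * N + ∑ g ∈ α.coeff.support.erase 1, (α.coeff g * c g).re :=
        (add_lt_add_iff_left _).mpr
          (sum_lt_sum_of_nonempty ⟨g₀, mem_erase.mpr ⟨hg₀_one, hg₀⟩⟩ hterm)
    _ = (∑ g ∈ α.coeff.support, α.coeff g * c g).re := by
        rw [hsplit, Complex.add_re, Complex.re_sum, Complex.re_mul_ofReal]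

end MonoidAlgebra

/-- In the group algebra of a torsion-free group, every nonzero golden element is
regular. -/
theorem stmt_12 {G : Type*} [Group G] [DecidableEq G] (hG : ∀ g : G, g ≠ 1 → ¬IsOfFinOrder g)
    (α : MonoidAlgebra ℂ G) (hα : α ≠ 0) (hgold : IsGolden α) :
    ∀ β : MonoidAlgebra ℂ G, β ≠ 0 → α * β ≠ 0 := by
  intro β hβ hαβ
  by_cases hα_supp : α.coeff.support ⊆ {1}
  · exact mul_ne_zero_of_support_subset_one hα hβ hα_supp hαβ
  obtain ⟨g₀, hg₀, hg₀_one⟩ := not_subset.mp hα_supp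
  have hcorr (g : G) (hg : g ≠ 1) :
      ‖β.coeff.autocorrelation g‖ < ∑ x ∈ β.coeff.support, ‖β.coeff x‖ ^ 2 :=
    Finsupp.norm_autocorrelation_lt_of_not_isOfFinOrder (coeff_eq_zero.not.mpr hβ) (hG g hg)
  have hpos := re_sum_coeff_mul_pos_of_upsilon_nonneg hgold.2 β.coeff.autocorrelation_one hcorr
    hg₀ (mem_singleton.not.mp hg₀_one)
  rw [← sum_coeff_mul_mul_conj, hαβ] at hpos
  simp at hpos
end

section
/- Let G be a group and let α = ∑_{g∈G} a_g·g ∈ ℂG be self-adjoint. Then α admits the decomposition α = Υ(α)·1 + (1/2)·∑_{g ∈ supp α, g ≠ 1} |a_g| · v_g* v_g, where for each g ≠ 1 in the support of α, v_g = (conj(a_g)/|a_g|)·1 + g ∈ ℂG, and the sum is the finite sum over the nonidentity elements of the support of α. -/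
open scoped ENNReal

/-!
For `‖c‖ = 1` one has `(c̄·1 + g⁻¹)(c·1 + g) = 2·1 + c̄·g + c·g⁻¹`, so with `c = conj(a_g)/|a_g|`
the summand `|a_g| v_g* v_g` is `2|a_g|·1 + a_g·g + conj(a_g)·g⁻¹`. Since `α` is self-adjoint,
`conj(a_g) = a_{g⁻¹}` and `g ↦ g⁻¹` permutes the nonidentity support, so the `g⁻¹`-terms add up to
the nonidentity part of `α` a second time; the factor `1/2` leaves that part once, and the
identity coefficient is `Υ(α) + ∑_{g ≠ 1} |a_g| = a_1`.
-/

namespace MonoidAlgebra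

section Monoid

variable {R M : Type*} [Semiring R] [Monoid M]

lemma single_one_eq_smul_one (r : R) : single (1 : M) r = r • 1 := by
  rw [one_def, smul_single', mul_one]

lemma single_one_add_sum_support_erase_one [DecidableEq M] (α : MonoidAlgebra R M) :
    single 1 (α.coeff 1) + ∑ g ∈ α.coeff.support.erase 1, single g (α.coeff g) = α := by
  by_cases h : 1 ∈ α.coeff.support
  · rw [Finset.add_sum_erase _ (fun g => single g (α.coeff g)) h]
    exact sum_coeff_single α
  · rw [Finsupp.notMem_support_iff.1 h, single_zero, zero_add, Finset.erase_eq_of_notMem h]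
    exact sum_coeff_single α

end Monoid

variable {G : Type*} [Group G]

@[simp]
lemma adj_coeff (α : MonoidAlgebra ℂ G) (x : G) :
    (adj α).coeff x = starRingEnd ℂ (α.coeff x⁻¹) := rfl

lemma adj_add (α β : MonoidAlgebra ℂ G) : adj (α + β) = adj α + adj β := by
  ext x
  simp [coeff_add]

lemma adj_single (g : G) (a : ℂ) : adj (single g a) = single g⁻¹ (starRingEnd ℂ a) := by
  classical
  ext x
  simp [coeff_single, Finsupp.single_apply, apply_ite (starRingEnd ℂ), inv_eq_iff_eq_inv]

lemma coeff_inv_of_adj_eq_self {α : MonoidAlgebra ℂ G} (hα : adj α = α) (x : G) :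
    α.coeff x⁻¹ = starRingEnd ℂ (α.coeff x) := by
  conv_lhs => rw [← hα]
  rw [adj_coeff, inv_inv]

lemma ofReal_re_coeff_one_of_adj_eq_self {α : MonoidAlgebra ℂ G} (hα : adj α = α) :
    ((α.coeff 1).re : ℂ) = α.coeff 1 := by
  refine Complex.conj_eq_iff_re.1 ?_
  simpa using (coeff_inv_of_adj_eq_self hα 1).symm

lemma adj_mul_self_smul_one_add_of {c : ℂ} (hc : ‖c‖ = 1) (g : G) :
    adj (c • 1 + of ℂ G g) * (c • 1 + of ℂ G g) =
      single 1 2 + single g (starRingEnd ℂ c) + single g⁻¹ c := by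
  have hcc : starRingEnd ℂ c * c = 1 := by
    rw [mul_comm, Complex.mul_conj, Complex.normSq_eq_norm_sq, hc]; norm_num
  simp only [one_def, smul_single', mul_one, of_apply, adj_add, adj_single, inv_one, add_mul,
    mul_add, single_mul_single, one_mul, mul_one, inv_mul_cancel, hcc, map_one]
  rw [show (2 : ℂ) = 1 + 1 by norm_num, single_add]
  abel

lemma norm_smul_adj_mul_self_of_ne_zero {a : ℂ} (ha : a ≠ 0) (g : G) :
    (‖a‖ : ℂ) • (adj ((starRingEnd ℂ a / ‖a‖) • 1 + of ℂ G g) *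
        ((starRingEnd ℂ a / ‖a‖) • 1 + of ℂ G g)) =
      single 1 (2 * ‖a‖ : ℂ) + single g a + single g⁻¹ (starRingEnd ℂ a) := by
  have hnorm : ‖a‖ ≠ 0 := norm_ne_zero_iff.2 ha
  have hunit : ‖starRingEnd ℂ a / ‖a‖‖ = 1 := by
    rw [norm_div, Complex.norm_conj, Complex.norm_real, norm_norm, div_self hnorm]
  rw [adj_mul_self_smul_one_add_of hunit, smul_add, smul_add, smul_single', smul_single',
    smul_single', map_div₀, Complex.conj_conj, Complex.conj_ofReal, mul_comm _ (2 : ℂ)]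
  have hnorm' : (‖a‖ : ℂ) ≠ 0 := Complex.ofReal_ne_zero.2 hnorm
  congr 3 <;> field_simp

lemma sum_single_inv_conj_of_adj_eq_self [DecidableEq G] {α : MonoidAlgebra ℂ G}
    (hα : adj α = α) :
    ∑ g ∈ α.coeff.support.erase 1, single g⁻¹ (starRingEnd ℂ (α.coeff g)) =
      ∑ g ∈ α.coeff.support.erase 1, single g (α.coeff g) := by
  refine Finset.sum_equiv (Equiv.inv G) (fun g => ?_) (fun g _ => ?_) <;>
    simp [coeff_inv_of_adj_eq_self hα]

lemma upsilon_add_sum_norm_of_adj_eq_self [DecidableEq G] {α : MonoidAlgebra ℂ G}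
    (hα : adj α = α) :
    (Upsilon α : ℂ) + ∑ g ∈ α.coeff.support.erase 1, (‖α.coeff g‖ : ℂ) = α.coeff 1 := by
  rw [Upsilon, Complex.ofReal_sub, ofReal_re_coeff_one_of_adj_eq_self hα, Complex.ofReal_sum]
  ring

end MonoidAlgebra

/-- Every self-adjoint `α ∈ ℂG` decomposes as
`α = Υ(α)·1 + (1/2)·∑_{1 ≠ g ∈ supp α} |a_g| · v_g* v_g`
where `v_g = (conj(a_g)/|a_g|)·1 + g`. -/
theorem stmt_14 {G : Type*} [Group G] [DecidableEq G] (α : MonoidAlgebra ℂ G)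
    (hsa : MonoidAlgebra.adj α = α) :
    α = ((Upsilon α : ℂ)) • (1 : MonoidAlgebra ℂ G) +
        (1 / 2 : ℂ) • ∑ g ∈ α.coeff.support.erase 1,
          ((‖α.coeff g‖ : ℂ)) •
            (MonoidAlgebra.adj
                ((starRingEnd ℂ (α.coeff g) / ‖α.coeff g‖) • (1 : MonoidAlgebra ℂ G) +
                  MonoidAlgebra.of ℂ G g) *
              ((starRingEnd ℂ (α.coeff g) / ‖α.coeff g‖) • (1 : MonoidAlgebra ℂ G) +
                MonoidAlgebra.of ℂ G g)) := by
  rw [Finset.sum_congr rfl fun g hg => MonoidAlgebra.norm_smul_adj_mul_self_of_ne_zero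
      (Finsupp.mem_support_iff.1 (Finset.mem_of_mem_erase hg)) g,
    Finset.sum_add_distrib, Finset.sum_add_distrib,
    MonoidAlgebra.sum_single_inv_conj_of_adj_eq_self hsa]
  simp only [MonoidAlgebra.single_one_eq_smul_one, ← Finset.sum_smul, ← Finset.mul_sum]
  conv_lhs => rw [← MonoidAlgebra.single_one_add_sum_support_erase_one α,
    MonoidAlgebra.single_one_eq_smul_one,
    ← MonoidAlgebra.upsilon_add_sum_norm_of_adj_eq_self hsa]
  module
end
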